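/- Let d₁, μ > 0, ρ ∈ (0,1), S > 0, let J₁ satisfy (J) with J₁(x) = 0 for |x| ≥ S, and let (φ,c) be a semi-wave pair. Fix ε ∈ (0,1/2) and K ∈ (1/2,1). For L > 0 define the lower-solution pair (h̲, u̲). Then for all sufficiently large L > 0: (a) ∂_t u̲(t,x) ≤ d₁ ∫_{(2K−1)h̲(t)}^{h̲(t)} J₁(x−y) u̲(t,y) dy − d₁ u̲(t,x) + u̲(t,x)(1 − ρ − u̲(t,x)) for every t > 0 and every x ∈ ((2K−1)h̲(t), h̲(t)) with x ≠ K h̲(t); (b) h̲′(t) ≤ μ ∫_{(2K−1)h̲(t)}^{h̲(t)} ∫_{h̲(t)}^{∞} J₁(x−y) u̲(t,x) dy dx for t > 0; (c) u̲(t, h̲(t)) = u̲(t, (2K−1)h̲(t)) = 0 for t ≥ 0. -/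

import Mathlib

open MeasureTheory Filter Topology

/-- Assumption (J) on a kernel function. -/
def IsKernel (J : ℝ → ℝ) : Prop :=
  Continuous J ∧ (∃ C, ∀ x, J x ≤ C) ∧ (∀ x, J (-x) = J x) ∧
    (∀ x, 0 ≤ J x) ∧ 0 < J 0 ∧ (∫ x, J x) = 1

/-- A semi-wave pair `(φ, c)` (with derivative function `φ'`) for the nonlocal
free boundary problem with reaction `f_ρ(s) = s(1 - ρ - s)`. -/
structure SemiWave (d₁ μ ρ : ℝ) (J₁ : ℝ → ℝ) (φ φD : ℝ → ℝ) (c : ℝ) : Prop where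
  c_pos : 0 < c
  anti : AntitoneOn φ (Set.Iic 0)
  smooth : ∀ x ≤ 0, HasDerivWithinAt φ (φD x) (Set.Iic 0) x
  derivCont : ContinuousOn φD (Set.Iic 0)
  pos : ∀ x < 0, 0 < φ x
  zero : φ 0 = 0
  lim : Filter.Tendsto φ Filter.atBot (nhds (1 - ρ))
  eq : ∀ x < 0,
    d₁ * (∫ y in Set.Iic (0:ℝ), J₁ (x - y) * φ y) - d₁ * φ x + c * φD x
      + φ x * (1 - ρ - φ x) = 0
  speed : c = μ * ∫ x in Set.Iic (0:ℝ), (∫ y in Set.Ioi (0:ℝ), J₁ (x - y)) * φ x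

/-- The moving front `h̲(t) = c(1-2ε)t + L` of the lower solution. -/
noncomputable def lowerH (c ε L t : ℝ) : ℝ := c * (1 - 2 * ε) * t + L

/-- The lower solution `u̲(t,x)`, equal to `(1-ε)φ(x - h̲(t))` for
`K h̲(t) ≤ x ≤ h̲(t)` and to `(1-ε)φ((2K-1)h̲(t) - x)` for
`(2K-1)h̲(t) ≤ x ≤ K h̲(t)`. -/
noncomputable def lowerU (φ : ℝ → ℝ) (c ε K L t x : ℝ) : ℝ :=
  if x ≤ K * lowerH c ε L t then (1 - ε) * φ ((2 * K - 1) * lowerH c ε L t - x)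
  else (1 - ε) * φ (x - lowerH c ε L t)

/-!
Write `u̲(t,x) = (1-ε) φ(|x - m| - R)`: two copies of the semi-wave glued into a tent with centre
`m = K h̲(t)` and half-width `R = (1-K) h̲(t)`, and take `L` so large that `R ≥ S + M`. Seen from
its nearer edge, a point of the tent recedes at speed at most `c(1-2ε) ≤ c`; as `φ' ≤ 0`, the
semi-wave equation bounds `∂ₜu̲` by `(1-ε)` times the nonlocal and reaction terms of `φ`. The
nonlocal term of the tent differs from that of `φ` only within distance `S` of the centre, where
`φ ≥ φ(-M)` is within `δ = 1-ρ-φ(-M)` of its limit; `M` is chosen with `d₁ δ ≤ ε φ(-M)²`, so the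
loss is paid for by the gain `ε(1-ε)φ²` of the reaction term at the lower height `(1-ε)φ`. At the
front, the right half of the tent already collects the outflow of the semi-wave, so the front
condition reduces to the speed formula: `μ (1-ε) c/μ ≥ c(1-2ε)`.
-/

open Set

theorem setIntegral_comp_add_right {E : Type*} [NormedAddCommGroup E] [NormedSpace ℝ E]
    (f : ℝ → E) (s : Set ℝ) (d : ℝ) : ∫ x in (· + d) ⁻¹' s, f (x + d) = ∫ x in s, f x :=
  (measurePreserving_add_right volume d).setIntegral_preimage_emb
    (measurableEmbedding_addRight d) f s

theorem Continuous.stronglyMeasurable_setIntegral_comp_sub {J : ℝ → ℝ} (hJ : Continuous J)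
    (s : Set ℝ) : StronglyMeasurable fun z => ∫ y in s, J (z - y) :=
  (hJ.comp continuous_sub).stronglyMeasurable.integral_prod_right'
    (f := fun p : ℝ × ℝ => J (p.1 - p.2))

namespace IsKernel

variable {J : ℝ → ℝ}

theorem continuous (hJ : IsKernel J) : Continuous J := hJ.1

theorem even (hJ : IsKernel J) : J.Even := hJ.2.2.1

theorem nonneg (hJ : IsKernel J) (x : ℝ) : 0 ≤ J x := hJ.2.2.2.1 x

theorem integral_eq_one (hJ : IsKernel J) : ∫ x, J x = 1 := hJ.2.2.2.2.2

theorem integrable (hJ : IsKernel J) : Integrable J :=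
  Integrable.of_integral_ne_zero (by rw [hJ.integral_eq_one]; exact one_ne_zero)

theorem pos_of_eq_zero_of_le_abs {S : ℝ} (hJ : IsKernel J) (hsupp : ∀ x, S ≤ |x| → J x = 0) : 0 < S := by
  by_contra! hS
  exact hJ.2.2.2.2.1.ne' (hsupp 0 (by simpa using hS))

theorem setIntegral_comp_sub_le_one (hJ : IsKernel J) (x : ℝ) (s : Set ℝ) :
    ∫ y in s, J (x - y) ≤ 1 :=
  calc ∫ y in s, J (x - y) ≤ ∫ y, J (x - y) :=
        setIntegral_le_integral (hJ.integrable.comp_sub_left x)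
          (ae_of_all _ fun y => hJ.nonneg _)
    _ = 1 := by rw [integral_sub_left_eq_self, hJ.integral_eq_one]

end IsKernel

namespace SemiWave

variable {d₁ μ ρ c : ℝ} {J₁ φ φD : ℝ → ℝ}

theorem continuousOn (hsw : SemiWave d₁ μ ρ J₁ φ φD c) : ContinuousOn φ (Iic 0) :=
  fun x hx => (hsw.smooth x hx).continuousWithinAt

theorem nonneg (hsw : SemiWave d₁ μ ρ J₁ φ φD c) {x : ℝ} (hx : x ≤ 0) : 0 ≤ φ x := by
  rcases hx.lt_or_eq with hx | rfl
  · exact (hsw.pos x hx).le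
  · exact hsw.zero.ge

theorem le_one_sub (hsw : SemiWave d₁ μ ρ J₁ φ φD c) {x : ℝ} (hx : x ≤ 0) : φ x ≤ 1 - ρ :=
  ge_of_tendsto hsw.lim <| by
    filter_upwards [Filter.eventually_le_atBot x] with y hy
    exact hsw.anti (hy.trans hx) hx hy

theorem hasDerivAt (hsw : SemiWave d₁ μ ρ J₁ φ φD c) {x : ℝ} (hx : x < 0) :
    HasDerivAt φ (φD x) x :=
  (hsw.smooth x hx.le).hasDerivAt (Iic_mem_nhds hx)

theorem deriv_nonpos (hsw : SemiWave d₁ μ ρ J₁ φ φD c) {x : ℝ} (hx : x < 0) : φD x ≤ 0 := by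
  rw [← (hsw.hasDerivAt hx).hasDerivWithinAt.derivWithin (isOpen_Iio.uniqueDiffWithinAt hx)]
  exact (hsw.anti.mono Iio_subset_Iic_self).derivWithin_nonpos

/-- `ε φ²` is what the reduced height `(1 - ε) φ` gains in the reaction term, and
`d₁ (1 - ρ - φ)` bounds what the tent loses against the semi-wave in the nonlocal term. -/
theorem exists_loss_le_gain (hsw : SemiWave d₁ μ ρ J₁ φ φD c) (hρ : ρ < 1) {ε : ℝ}
    (hε : 0 < ε) : ∃ M ≥ 0, d₁ * (1 - ρ - φ (-M)) ≤ ε * φ (-M) ^ 2 := by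
  have hlim : Tendsto (fun z => ε * φ z ^ 2 - d₁ * (1 - ρ - φ z)) atBot
      (𝓝 (ε * (1 - ρ) ^ 2 - d₁ * (1 - ρ - (1 - ρ)))) :=
    ((hsw.lim.pow 2).const_mul ε).sub ((tendsto_const_nhds.sub hsw.lim).const_mul d₁)
  have hpos : 0 < ε * (1 - ρ) ^ 2 - d₁ * (1 - ρ - (1 - ρ)) := by
    rw [sub_self, mul_zero, sub_zero]
    exact mul_pos hε (pow_pos (sub_pos.2 hρ) 2)
  obtain ⟨z₀, hz₀⟩ := Filter.eventually_atBot.1 (hlim.eventually (lt_mem_nhds hpos))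
  refine ⟨max 0 (-z₀), le_max_left _ _, ?_⟩
  have := hz₀ (-max 0 (-z₀)) (neg_le.1 (le_max_right _ _))
  linarith

end SemiWave

noncomputable def lowerArg (c ε K L t x : ℝ) : ℝ :=
  |x - K * lowerH c ε L t| - (1 - K) * lowerH c ε L t

theorem lowerU_eq (φ : ℝ → ℝ) (c ε K L t x : ℝ) :
    lowerU φ c ε K L t x = (1 - ε) * φ (lowerArg c ε K L t x) := by
  unfold lowerU lowerArg
  split_ifs with hx
  · rw [abs_of_nonpos (sub_nonpos.2 hx)]
    ring_nf
  · rw [abs_of_pos (sub_pos.2 (not_le.1 hx))]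
    ring_nf

theorem hasDerivAt_lowerH (c ε L t : ℝ) :
    HasDerivAt (fun s => lowerH c ε L s) (c * (1 - 2 * ε)) t := by
  unfold lowerH
  simpa using ((hasDerivAt_id t).const_mul (c * (1 - 2 * ε))).add_const L

theorem exists_hasDerivAt_lowerArg {c ε K L t x : ℝ} (hc : 0 ≤ c) (hε : 0 ≤ ε)
    (hε' : ε ≤ 1 / 2) (hK : 0 ≤ K) (hx : x ≠ K * lowerH c ε L t) :
    ∃ v, -c ≤ v ∧ HasDerivAt (fun s => lowerArg c ε K L s x) v t := by
  set σ : ℝ := (SignType.sign (x - K * lowerH c ε L t) : ℝ)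
  have hσ : |σ| ≤ 1 := by
    rcases lt_trichotomy (x - K * lowerH c ε L t) 0 with h | h | h <;> simp [σ, h]
  have hσK : σ * K ≤ K := by
    nlinarith [neg_abs_le σ, le_abs_self σ, abs_nonneg σ]
  refine ⟨σ * -(K * (c * (1 - 2 * ε))) - (1 - K) * (c * (1 - 2 * ε)), ?_, ?_⟩
  · nlinarith [mul_le_mul_of_nonneg_right hσK (by nlinarith : 0 ≤ c * (1 - 2 * ε))]
  · exact ((hasDerivAt_abs (sub_ne_zero.2 hx)).comp t
      (((hasDerivAt_lowerH c ε L t).const_mul K).const_sub x)).sub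
      ((hasDerivAt_lowerH c ε L t).const_mul (1 - K))

theorem SemiWave.exists_hasDerivAt_lowerU_le {d₁ μ ρ c ε K L t x : ℝ} {J₁ φ φD : ℝ → ℝ}
    (hsw : SemiWave d₁ μ ρ J₁ φ φD c) (hε : 0 ≤ ε) (hε' : ε ≤ 1 / 2) (hK : 0 ≤ K)
    (hx : x ≠ K * lowerH c ε L t) (hζ : lowerArg c ε K L t x < 0) :
    ∃ D, HasDerivAt (fun s => lowerU φ c ε K L s x) D t ∧
      D ≤ (1 - ε) * -(c * φD (lowerArg c ε K L t x)) := by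
  obtain ⟨v, hv, hderiv⟩ := exists_hasDerivAt_lowerArg hsw.c_pos.le hε hε' hK hx
  refine ⟨(1 - ε) * (φD (lowerArg c ε K L t x) * v), ?_, ?_⟩
  · simp_rw [lowerU_eq]
    exact ((hsw.hasDerivAt hζ).comp t hderiv).const_mul (1 - ε)
  · have := mul_nonpos_of_nonpos_of_nonneg (hsw.deriv_nonpos hζ) (neg_le_iff_add_nonneg.1 hv)
    nlinarith

/-- The two integrands differ only for `y ∈ (ξ - S, 0)`, where the tent is within `δ` of the
bound `B` of `φ`. -/
theorem setIntegral_Iic_le_integral_tent_add {J φ : ℝ → ℝ} {S R ξ B δ : ℝ} (hJ : IsKernel J)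
    (hsupp : ∀ x, S ≤ |x| → J x = 0) (hφ : ContinuousOn φ (Iic 0)) (hφB : ∀ z ≤ 0, φ z ≤ B)
    (hSR : S ≤ R) (hξ : 0 ≤ ξ) (hξR : ξ ≤ R) (hδ : 0 ≤ δ)
    (hgap : ∀ y ∈ Ioo (ξ - S) 0, B ≤ φ (-y - R) + δ) :
    ∫ z in Iic 0, J (ξ - R - z) * φ z ≤ (∫ y in -R..R, J (ξ - y) * φ (|y| - R)) + δ := by
  have hJc : Continuous fun y => J (ξ - y) := hJ.continuous.comp (continuous_sub_left ξ)
  have hwave : IntegrableOn (fun y => J (ξ - y) * φ (y - R)) (Ioc (-R) R) :=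
    (hJc.continuousOn.mul (hφ.comp (continuous_sub_right R).continuousOn
      fun y hy => sub_nonpos.2 hy.2)).integrableOn_Icc.mono_set Ioc_subset_Icc_self
  have htent : IntegrableOn (fun y => J (ξ - y) * φ (|y| - R)) (Ioc (-R) R) :=
    (hJc.continuousOn.mul (hφ.comp (continuous_abs.sub continuous_const).continuousOn
      fun y hy => sub_nonpos.2 (abs_le.2 hy))).integrableOn_Icc.mono_set Ioc_subset_Icc_self
  have hpointwise : ∀ y ∈ Ioc (-R) R,
      J (ξ - y) * φ (y - R) ≤ J (ξ - y) * φ (|y| - R) + δ * J (ξ - y) := by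
    intro y hy
    have hδJ := mul_nonneg hδ (hJ.nonneg (ξ - y))
    rcases le_or_gt 0 y with hy0 | hy0
    · rw [abs_of_nonneg hy0]
      linarith
    rcases le_or_gt y (ξ - S) with hyS | hyS
    · rw [hsupp _ (by rw [abs_of_nonneg (by linarith)]; linarith)]
      linarith
    rw [abs_of_neg hy0]
    nlinarith [hJ.nonneg (ξ - y), hφB (y - R) (by linarith), hgap y ⟨hyS, hy0⟩]
  calc ∫ z in Iic 0, J (ξ - R - z) * φ z
      = ∫ y in Iic R, J (ξ - y) * φ (y - R) := by
        rw [← setIntegral_comp_add_right (fun y => J (ξ - y) * φ (y - R)) (Iic R) R]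
        congr 1
        · ext; simp
        · ext z; ring_nf
    _ = ∫ y in Ioc (-R) R, J (ξ - y) * φ (y - R) := by
        refine setIntegral_eq_of_subset_of_forall_sdiff_eq_zero measurableSet_Iic
          Ioc_subset_Iic_self fun y hy => ?_
        have hyR : y ≤ -R := not_lt.1 fun h => hy.2 ⟨h, hy.1⟩
        rw [hsupp _ (by rw [abs_of_nonneg (by linarith)]; linarith), zero_mul]
    _ ≤ ∫ y in Ioc (-R) R, (J (ξ - y) * φ (|y| - R) + δ * J (ξ - y)) :=
        setIntegral_mono_on hwave (htent.add (hJc.integrableOn_Icc.mono_set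
          Ioc_subset_Icc_self |>.const_mul δ)) measurableSet_Ioc hpointwise
    _ = (∫ y in -R..R, J (ξ - y) * φ (|y| - R)) + δ * ∫ y in Ioc (-R) R, J (ξ - y) := by
        rw [integral_add htent ((hJc.integrableOn_Icc.mono_set Ioc_subset_Icc_self).const_mul δ),
          integral_const_mul, intervalIntegral.integral_of_le (by linarith)]
    _ ≤ (∫ y in -R..R, J (ξ - y) * φ (|y| - R)) + δ := by
        nlinarith [hJ.setIntegral_comp_sub_le_one ξ (Ioc (-R) R)]

theorem SemiWave.kernel_integral_le_tent_add {d₁ μ ρ c ε S M R ξ : ℝ} {J₁ J φ φD : ℝ → ℝ}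
    (hsw : SemiWave d₁ μ ρ J₁ φ φD c) (hJ : IsKernel J) (hsupp : ∀ x, S ≤ |x| → J x = 0)
    (hd₁ : 0 ≤ d₁) (hε : 0 ≤ ε) (hM : 0 ≤ M) (hloss : d₁ * (1 - ρ - φ (-M)) ≤ ε * φ (-M) ^ 2)
    (hR : S + M ≤ R) (hξ : 0 ≤ ξ) (hξR : ξ < R) :
    d₁ * ∫ z in Iic 0, J (ξ - R - z) * φ z ≤
      d₁ * (∫ y in -R..R, J (ξ - y) * φ (|y| - R)) + ε * φ (ξ - R) ^ 2 := by
  have hφB : ∀ z ≤ 0, φ z ≤ 1 - ρ := fun z hz => hsw.le_one_sub hz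
  have hSR : S ≤ R := by linarith
  have hgain : 0 ≤ ε * φ (ξ - R) ^ 2 := by positivity
  rcases le_or_gt S ξ with hξS | hξS
  · have := setIntegral_Iic_le_integral_tent_add hJ hsupp hsw.continuousOn hφB hSR hξ hξR.le
      le_rfl fun y hy => absurd hy.2 (by linarith [hy.1])
    nlinarith [mul_le_mul_of_nonneg_left this hd₁]
  · have hφM : φ (-M) ≤ φ (ξ - R) :=
      hsw.anti (by simp; linarith) (by simpa using hM) (by linarith)
    have := setIntegral_Iic_le_integral_tent_add hJ hsupp hsw.continuousOn hφB hSR hξ hξR.le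
      (sub_nonneg.2 (hsw.le_one_sub (x := -M) (by linarith))) fun y hy => by
        have : φ (-M) ≤ φ (-y - R) :=
          hsw.anti (by simp; linarith [hy.1]) (by simpa using hM) (by linarith [hy.1])
        linarith
    have hsq := pow_le_pow_left₀ (hsw.nonneg (x := -M) (by linarith)) hφM 2
    nlinarith [mul_le_mul_of_nonneg_left this hd₁, mul_le_mul_of_nonneg_left hsq hε]

theorem integral_comp_sub_mul_abs_eq {J g : ℝ → ℝ} (hJ : J.Even) (ξ R : ℝ) :
    ∫ y in -R..R, J (|ξ| - y) * g |y| = ∫ y in -R..R, J (ξ - y) * g |y| := by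
  rcases abs_choice ξ with h | h
  · rw [h]
  · rw [h, ← neg_neg R, ← intervalIntegral.integral_comp_neg, neg_neg]
    congr 1 with y
    rw [abs_neg, ← hJ, neg_sub, sub_neg_eq_add, neg_add_eq_sub]

theorem integral_kernel_mul_lowerU {J : ℝ → ℝ} (hJ : J.Even) (φ : ℝ → ℝ)
    (c ε K L t x : ℝ) :
    ∫ y in ((2 * K - 1) * lowerH c ε L t)..(lowerH c ε L t), J (x - y) * lowerU φ c ε K L t y =
      (1 - ε) * ∫ y in (-((1 - K) * lowerH c ε L t))..((1 - K) * lowerH c ε L t),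
        J (|x - K * lowerH c ε L t| - y) * φ (|y| - (1 - K) * lowerH c ε L t) := by
  set h := lowerH c ε L t
  set R := (1 - K) * h
  have hshift := intervalIntegral.integral_comp_sub_right
    (fun y => J (x - K * h - y) * φ (|y| - R)) (K * h) (a := (2 * K - 1) * h) (b := h)
  simp only [sub_sub_sub_cancel_right] at hshift
  simp_rw [lowerU_eq, lowerArg, mul_left_comm (J _), intervalIntegral.integral_const_mul]
  rw [integral_comp_sub_mul_abs_eq (g := fun a => φ (a - R)) hJ, hshift]
  congr 2 <;> ring

theorem SemiWave.lowerU_subsolution {d₁ μ ρ c ε K L S M t x : ℝ} {J₁ φ φD : ℝ → ℝ}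
    (hsw : SemiWave d₁ μ ρ J₁ φ φD c) (hJ : IsKernel J₁) (hsupp : ∀ x, S ≤ |x| → J₁ x = 0)
    (hd₁ : 0 ≤ d₁) (hε : 0 ≤ ε) (hε' : ε ≤ 1 / 2) (hK : 0 ≤ K) (hM : 0 ≤ M)
    (hloss : d₁ * (1 - ρ - φ (-M)) ≤ ε * φ (-M) ^ 2) (hR : S + M ≤ (1 - K) * lowerH c ε L t)
    (hxl : (2 * K - 1) * lowerH c ε L t < x) (hxr : x < lowerH c ε L t)
    (hx : x ≠ K * lowerH c ε L t) :
    ∃ D, HasDerivAt (fun s => lowerU φ c ε K L s x) D t ∧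
      D ≤ d₁ * (∫ y in ((2 * K - 1) * lowerH c ε L t)..(lowerH c ε L t),
            J₁ (x - y) * lowerU φ c ε K L t y)
        - d₁ * lowerU φ c ε K L t x
        + lowerU φ c ε K L t x * (1 - ρ - lowerU φ c ε K L t x) := by
  set h := lowerH c ε L t
  set R := (1 - K) * h
  set ξ := |x - K * h|
  have hξR : ξ < R := abs_sub_lt_iff.2 ⟨by linarith, by linarith⟩
  have hζ : lowerArg c ε K L t x = ξ - R := rfl
  obtain ⟨D, hD, hDle⟩ :=
    hsw.exists_hasDerivAt_lowerU_le hε hε' hK hx (hζ ▸ sub_neg.2 hξR)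
  refine ⟨D, hD, ?_⟩
  have hwave := hsw.eq (ξ - R) (sub_neg.2 hξR)
  have hcmp := hsw.kernel_integral_le_tent_add hJ hsupp hd₁ hε hM hloss hR (abs_nonneg _) hξR
  rw [integral_kernel_mul_lowerU hJ.even, lowerU_eq, hζ]
  rw [hζ] at hDle
  nlinarith [mul_le_mul_of_nonneg_left hcmp (by linarith : 0 ≤ 1 - ε)]

/-- The right half `(b - R, b]` of the tent alone reproduces the outflow of the semi-wave, since
the kernel does not reach further than `S ≤ R`. -/
theorem setIntegral_Iic_flux_le {J φ : ℝ → ℝ} {S R : ℝ} (hJ : IsKernel J)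
    (hsupp : ∀ x, S ≤ |x| → J x = 0) (hφ : ContinuousOn φ (Iic 0))
    (hφ0 : ∀ z ≤ 0, 0 ≤ φ z) (hSR : S ≤ R) (b : ℝ) :
    ∫ z in Iic 0, (∫ y in Ioi 0, J (z - y)) * φ z ≤
      ∫ x in (b - 2 * R)..b, (∫ y in Ioi b, J (x - y)) * φ (|x - (b - R)| - R) := by
  set F := fun z => ∫ y in Ioi 0, J (z - y)
  have hS := hJ.pos_of_eq_zero_of_le_abs hsupp
  have hF0 : ∀ z, 0 ≤ F z := fun z =>
    setIntegral_nonneg measurableSet_Ioi fun y _ => hJ.nonneg _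
  have hF_far : ∀ z ≤ -S, F z = 0 := fun z hz =>
    setIntegral_eq_zero_of_forall_eq_zero fun y hy => hsupp _ <| by
      rw [abs_of_neg (by linarith [mem_Ioi.1 hy])]; linarith [mem_Ioi.1 hy]
  have hFb : ∀ x, ∫ y in Ioi b, J (x - y) = F (x - b) := fun x => by
    rw [← setIntegral_comp_add_right (fun y => J (x - y)) (Ioi b) b]
    congr 1
    · ext; simp
    · ext y; ring_nf
  have htent : IntegrableOn (fun z => F z * φ (|z + R| - R)) (Ioc (-2 * R) 0) := by
    refine Integrable.bdd_mul (c := 1) ?_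
      (hJ.continuous.stronglyMeasurable_setIntegral_comp_sub _).aestronglyMeasurable
      (ae_of_all _ fun z => by
        rw [Real.norm_eq_abs, abs_of_nonneg (hF0 z)]
        exact hJ.setIntegral_comp_sub_le_one z _)
    refine ((hφ.comp (by fun_prop : Continuous fun z => |z + R| - R).continuousOn
      fun z hz => ?_).integrableOn_Icc).mono_set Ioc_subset_Icc_self
    rw [mem_Iic, sub_nonpos, abs_le]
    constructor <;> linarith [hz.1, hz.2]
  calc ∫ z in Iic 0, F z * φ z
      = ∫ z in Ioc (-R) 0, F z * φ z := by
        refine setIntegral_eq_of_subset_of_forall_sdiff_eq_zero measurableSet_Iic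
          Ioc_subset_Iic_self fun z hz => ?_
        have hzR : z ≤ -R := not_lt.1 fun h => hz.2 ⟨h, hz.1⟩
        rw [hF_far z (by linarith), zero_mul]
    _ = ∫ z in Ioc (-R) 0, F z * φ (|z + R| - R) :=
        setIntegral_congr_fun measurableSet_Ioc fun z hz => by
          rw [abs_of_pos (by linarith [hz.1]), add_sub_cancel_right]
    _ ≤ ∫ z in Ioc (-2 * R) 0, F z * φ (|z + R| - R) := by
        refine setIntegral_mono_set htent ?_ (Ioc_subset_Ioc_left (by linarith)).eventuallyLE
        refine ae_restrict_of_forall_mem measurableSet_Ioc fun z hz => ?_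
        refine mul_nonneg (hF0 z) (hφ0 _ ?_)
        rw [sub_nonpos, abs_le]
        constructor <;> linarith [hz.1, hz.2]
    _ = ∫ x in (b - 2 * R)..b, (∫ y in Ioi b, J (x - y)) * φ (|x - (b - R)| - R) := by
        rw [← intervalIntegral.integral_of_le (by linarith)]
        have hshift := intervalIntegral.integral_comp_sub_right
          (fun z => F z * φ (|z + R| - R)) b (a := b - 2 * R) (b := b)
        simp only [sub_sub_cancel_left, sub_self] at hshift
        rw [neg_mul, ← hshift]
        congr 1 with x
        rw [hFb, sub_add]

theorem SemiWave.speed_le_flux_lowerU {d₁ μ ρ c ε K L S t : ℝ} {J₁ φ φD : ℝ → ℝ}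
    (hsw : SemiWave d₁ μ ρ J₁ φ φD c) (hJ : IsKernel J₁) (hsupp : ∀ x, S ≤ |x| → J₁ x = 0)
    (hμ : 0 ≤ μ) (hε : 0 ≤ ε) (hε1 : ε ≤ 1) (hR : S ≤ (1 - K) * lowerH c ε L t) :
    c * (1 - 2 * ε) ≤ μ * ∫ x in ((2 * K - 1) * lowerH c ε L t)..(lowerH c ε L t),
      (∫ y in Ioi (lowerH c ε L t), J₁ (x - y)) * lowerU φ c ε K L t x := by
  set h := lowerH c ε L t
  set R := (1 - K) * h
  have hflux := setIntegral_Iic_flux_le hJ hsupp hsw.continuousOn (fun _ hz => hsw.nonneg hz) hR h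
  have hKh : K * h = h - R := by ring
  have hleft : (2 * K - 1) * h = h - 2 * R := by ring
  simp_rw [lowerU_eq, lowerArg, mul_left_comm _ (1 - ε), intervalIntegral.integral_const_mul]
  rw [hKh, hleft]
  have := mul_le_mul_of_nonneg_left hflux (mul_nonneg hμ (by linarith : (0 : ℝ) ≤ 1 - ε))
  nlinarith [hsw.speed, hsw.c_pos]

theorem SemiWave.lowerU_boundary {d₁ μ ρ c ε K L t : ℝ} {J₁ φ φD : ℝ → ℝ}
    (hsw : SemiWave d₁ μ ρ J₁ φ φD c) (hR : 0 ≤ (1 - K) * lowerH c ε L t) :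
    lowerU φ c ε K L t (lowerH c ε L t) = 0 ∧
      lowerU φ c ε K L t ((2 * K - 1) * lowerH c ε L t) = 0 := by
  have hright : lowerH c ε L t - K * lowerH c ε L t = (1 - K) * lowerH c ε L t := by ring
  have hleft : (2 * K - 1) * lowerH c ε L t - K * lowerH c ε L t =
      -((1 - K) * lowerH c ε L t) := by ring
  simp only [lowerU_eq, lowerArg, hright, hleft, abs_neg, abs_of_nonneg hR, sub_self, hsw.zero,
    mul_zero, and_self]

theorem lower_solution_inequalities_general
    (d₁ μ ρ S : ℝ) (hd₁ : 0 < d₁) (hμ : 0 < μ) (hρ1 : ρ < 1)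
    (J₁ : ℝ → ℝ) (hJ : IsKernel J₁)
    (hsupp : ∀ x : ℝ, S ≤ |x| → J₁ x = 0)
    (φ φD : ℝ → ℝ) (c : ℝ) (hsw : SemiWave d₁ μ ρ J₁ φ φD c)
    (ε K : ℝ) (hε0 : 0 < ε) (hε : ε < 1 / 2) (hK1 : 1 / 2 < K) (hK2 : K < 1) :
    ∃ L₁ > 0, ∀ L ≥ L₁,
      (∀ t > 0, ∀ x : ℝ, (2 * K - 1) * lowerH c ε L t < x → x < lowerH c ε L t →
        x ≠ K * lowerH c ε L t →
        ∃ D, HasDerivAt (fun s => lowerU φ c ε K L s x) D t ∧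
          D ≤ d₁ * (∫ y in ((2 * K - 1) * lowerH c ε L t)..(lowerH c ε L t),
                J₁ (x - y) * lowerU φ c ε K L t y)
              - d₁ * lowerU φ c ε K L t x
              + lowerU φ c ε K L t x * (1 - ρ - lowerU φ c ε K L t x)) ∧
      (∀ t > 0, c * (1 - 2 * ε) ≤
          μ * ∫ x in ((2 * K - 1) * lowerH c ε L t)..(lowerH c ε L t),
                (∫ y in Set.Ioi (lowerH c ε L t), J₁ (x - y)) * lowerU φ c ε K L t x) ∧
      (∀ t ≥ 0, lowerU φ c ε K L t (lowerH c ε L t) = 0 ∧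
         lowerU φ c ε K L t ((2 * K - 1) * lowerH c ε L t) = 0) := by
  obtain ⟨M, hM, hloss⟩ := hsw.exists_loss_le_gain hρ1 hε0
  have hS := hJ.pos_of_eq_zero_of_le_abs hsupp
  refine ⟨max 1 ((S + M) / (1 - K)), by positivity, fun L hL => ?_⟩
  have hfront : ∀ t ≥ 0, S + M ≤ (1 - K) * lowerH c ε L t := fun t ht => by
    have hL' : (S + M) / (1 - K) ≤ lowerH c ε L t := by
      unfold lowerH
      nlinarith [le_max_right 1 ((S + M) / (1 - K)),
        mul_pos hsw.c_pos (by linarith : 0 < 1 - 2 * ε)]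
    rw [div_le_iff₀ (by linarith)] at hL'
    linarith
  refine ⟨fun t ht x hxl hxr hx => ?_, fun t ht => ?_, fun t ht => ?_⟩
  · exact hsw.lowerU_subsolution hJ hsupp hd₁.le hε0.le hε.le (by linarith) hM hloss
      (hfront t ht.le) hxl hxr hx
  · exact hsw.speed_le_flux_lowerU hJ hsupp hμ.le hε0.le (by linarith)
      (by linarith [hfront t ht.le])
  · exact hsw.lowerU_boundary (by linarith [hfront t ht])

/-- the inequalities (4.12) in the proof of Theorem 1.3. For a
compactly supported kernel and a semi-wave pair `(φ, c)`, the pair `(h̲, u̲)` is a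
lower solution for all sufficiently large `L`. -/
theorem lower_solution_inequalities
    (d₁ μ ρ S : ℝ) (hd₁ : 0 < d₁) (hμ : 0 < μ) (hρ0 : 0 < ρ) (hρ1 : ρ < 1) (hS : 0 < S)
    (J₁ : ℝ → ℝ) (hJ : IsKernel J₁)
    (hsupp : ∀ x : ℝ, S ≤ |x| → J₁ x = 0)
    (φ φD : ℝ → ℝ) (c : ℝ) (hsw : SemiWave d₁ μ ρ J₁ φ φD c)
    (ε K : ℝ) (hε0 : 0 < ε) (hε : ε < 1 / 2) (hK1 : 1 / 2 < K) (hK2 : K < 1) :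
    ∃ L₁ > 0, ∀ L ≥ L₁,
      (∀ t > 0, ∀ x : ℝ, (2 * K - 1) * lowerH c ε L t < x → x < lowerH c ε L t →
        x ≠ K * lowerH c ε L t →
        ∃ D, HasDerivAt (fun s => lowerU φ c ε K L s x) D t ∧
          D ≤ d₁ * (∫ y in ((2 * K - 1) * lowerH c ε L t)..(lowerH c ε L t),
                J₁ (x - y) * lowerU φ c ε K L t y)
              - d₁ * lowerU φ c ε K L t x
              + lowerU φ c ε K L t x * (1 - ρ - lowerU φ c ε K L t x)) ∧
      (∀ t > 0, c * (1 - 2 * ε) ≤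
          μ * ∫ x in ((2 * K - 1) * lowerH c ε L t)..(lowerH c ε L t),
                (∫ y in Set.Ioi (lowerH c ε L t), J₁ (x - y)) * lowerU φ c ε K L t x) ∧
      (∀ t ≥ 0, lowerU φ c ε K L t (lowerH c ε L t) = 0 ∧
         lowerU φ c ε K L t ((2 * K - 1) * lowerH c ε L t) = 0) :=
  lower_solution_inequalities_general d₁ μ ρ S hd₁ hμ hρ1 J₁ hJ hsupp φ φD c hsw ε K hε0 hε hK1 hK2
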